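/- Define L₁(n,b) := ∫₀¹ (Γ(b-p)/Γ(b+1)) · (Γ(n-b+p)/Γ(n-b+1)) · dp/(Γ(1-p)Γ(1+p)) and f₁(u) := ∫₀¹ u^{-p-1}(1-u)^{p-1} · sin(πp)/(πp) dp for u ∈ (0,1). Let (b_n) be a sequence of integers with 1 ≤ b_n ≤ n-1 and b_n/n → u for some u ∈ (0,1). Then lim_{n→∞} n²·L₁(n,b_n) = f₁(u). Equivalently, n·E[SFS_{n,b_n}] → θ·f₁(u), since E[SFS_{n,b}] = θ·n·L₁(n,b). -/

import Mathlib

open Real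

/-- `L₁(n,b) = ∫₀¹ (Γ(b-p)/Γ(b+1)) (Γ(n-b+p)/Γ(n-b+1)) dp/(Γ(1-p)Γ(1+p))`. -/
noncomputable def L1 (n b : ℕ) : ℝ :=
  ∫ p in (0:ℝ)..1, (Real.Gamma ((b : ℝ) - p) / Real.Gamma ((b : ℝ) + 1)) *
    (Real.Gamma ((n : ℝ) - (b : ℝ) + p) / Real.Gamma ((n : ℝ) - (b : ℝ) + 1)) /
    (Real.Gamma (1 - p) * Real.Gamma (1 + p))

/-- `f₁(u) = ∫₀¹ u^{-p-1}(1-u)^{p-1} sin(πp)/(πp) dp`. -/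
noncomputable def f1 (u : ℝ) : ℝ :=
  ∫ p in (0:ℝ)..1, u ^ (-p - 1) * (1 - u) ^ (p - 1) * (Real.sin (π * p) / (π * p))

/-!
Write `Γ(x+s) = R_s(x) Γ(x) x^s`. Log-convexity of `Γ` (Gautschi's inequality) squeezes the
ratio `R_s(x)` between `(x/(x+s))^(1-s)` and `1`, so `R_s(x) → 1` as `x → ∞` (Wendel's limit).
Factoring the integrand of `n² L₁(n,b)` through these ratios and the reflection formula
`Γ(1-p)Γ(1+p) = πp / sin(πp)` leaves
`R_{1-p}(b-1) R_p(n-b) ((b-1)/n)^(-p) (b/n)^(-1) ((n-b)/n)^(p-1) sin(πp)/(πp)`,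
which converges pointwise to the integrand of `f₁(u)` and, since `R ≤ 1` and `b/n` stays away
from `0` and `1`, is bounded uniformly in `p`; dominated convergence concludes.
-/

open Filter Topology MeasureTheory Set

namespace Real

@[fun_prop]
theorem measurable_Gamma : Measurable Gamma :=
  measurable_of_tendsto_metrizable (fun n => by unfold GammaSeq; fun_prop)
    (tendsto_pi_nhds.2 GammaSeq_tendsto_Gamma)

theorem Gamma_add_le_mul_rpow {x s : ℝ} (hx : 0 < x) (hs0 : 0 < s) (hs1 : s < 1) :
    Gamma (x + s) ≤ Gamma x * x ^ s := by
  have hG := Gamma_pos_of_pos hx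
  calc Gamma (x + s) = Gamma ((1 - s) * x + s * (x + 1)) := by ring_nf
    _ ≤ Gamma x ^ (1 - s) * Gamma (x + 1) ^ s :=
      Gamma_mul_add_mul_le_rpow_Gamma_mul_rpow_Gamma hx (by linarith) (by linarith) hs0 (by ring)
    _ = Gamma x * x ^ s := by
      rw [Gamma_add_one hx.ne', mul_rpow hx.le hG.le, mul_left_comm, ← rpow_add hG,
        sub_add_cancel, rpow_one, mul_comm]

noncomputable def gammaRatio (s x : ℝ) : ℝ := Gamma (x + s) / (Gamma x * x ^ s)

theorem gammaRatio_pos {s x : ℝ} (hx : 0 < x) (hs : 0 ≤ s) : 0 < gammaRatio s x := by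
  unfold gammaRatio
  have := Gamma_pos_of_pos hx
  have := Gamma_pos_of_pos (add_pos_of_pos_of_nonneg hx hs)
  positivity

theorem gammaRatio_le_one {s x : ℝ} (hx : 0 < x) (hs0 : 0 < s) (hs1 : s < 1) :
    gammaRatio s x ≤ 1 :=
  div_le_one_of_le₀ (Gamma_add_le_mul_rpow hx hs0 hs1)
    (by have := Gamma_pos_of_pos hx; positivity)

theorem rpow_div_add_le_gammaRatio {s x : ℝ} (hx : 0 < x) (hs0 : 0 < s) (hs1 : s < 1) :
    (x / (x + s)) ^ (1 - s) ≤ gammaRatio s x := by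
  have hxs : 0 < x + s := by linarith
  have hG := Gamma_pos_of_pos hx
  -- Gautschi's bound at `x + s` with step `1 - s` reaches `x + 1`
  have h := Gamma_add_le_mul_rpow hxs (by linarith : 0 < 1 - s) (by linarith)
  rw [add_add_sub_cancel, Gamma_add_one hx.ne'] at h
  rw [gammaRatio, le_div_iff₀ (by positivity), div_rpow hx.le hxs.le, rpow_sub hx, rpow_one,
    div_mul_eq_mul_div, div_le_iff₀ (by positivity)]
  calc x / x ^ s * (Gamma x * x ^ s) = x * Gamma x := by field_simp
    _ ≤ _ := h

theorem tendsto_gammaRatio_atTop {s : ℝ} (hs0 : 0 < s) (hs1 : s < 1) :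
    Tendsto (gammaRatio s) atTop (𝓝 1) := by
  have hlow : Tendsto (fun x : ℝ => (x / (x + s)) ^ (1 - s)) atTop (𝓝 1) := by
    have h : Tendsto (fun x : ℝ => x / (x + s)) atTop (𝓝 1) := by
      have h0 : Tendsto (fun x : ℝ => 1 - s / (x + s)) atTop (𝓝 (1 - 0)) :=
        tendsto_const_nhds.sub
          (tendsto_const_nhds.div_atTop (tendsto_atTop_add_const_right _ s tendsto_id))
      rw [sub_zero] at h0
      refine h0.congr' ?_
      filter_upwards [eventually_gt_atTop (-s)] with x hx
      have hxs : x + s ≠ 0 := by linarith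
      field_simp
      ring
    simpa using h.rpow_const (Or.inl one_ne_zero)
  refine tendsto_of_tendsto_of_tendsto_of_le_of_le' hlow tendsto_const_nhds ?_ ?_
  · filter_upwards [eventually_gt_atTop 0] with x hx using rpow_div_add_le_gammaRatio hx hs0 hs1
  · filter_upwards [eventually_gt_atTop 0] with x hx using gammaRatio_le_one hx hs0 hs1

theorem Gamma_sub_div_Gamma_add_one {x p : ℝ} (hx : 1 < x) :
    Gamma (x - p) / Gamma (x + 1) = gammaRatio (1 - p) (x - 1) * (x - 1) ^ (-p) / x := by
  have hx1 : 0 < x - 1 := by linarith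
  have hG := Gamma_pos_of_pos hx1
  have hGx : Gamma (x + 1) = x * ((x - 1) * Gamma (x - 1)) := by
    rw [Gamma_add_one (by linarith), ← Gamma_add_one hx1.ne', sub_add_cancel]
  rw [gammaRatio, show x - 1 + (1 - p) = x - p by ring, hGx, sub_eq_add_neg 1 p, rpow_add hx1,
    rpow_one]
  have := rpow_pos_of_pos hx1 (-p)
  field_simp

theorem Gamma_add_div_Gamma_add_one {y p : ℝ} (hy : 0 < y) :
    Gamma (y + p) / Gamma (y + 1) = gammaRatio p y * y ^ (p - 1) := by
  have hG := Gamma_pos_of_pos hy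
  rw [gammaRatio, Gamma_add_one hy.ne', rpow_sub_one hy.ne']
  have := rpow_pos_of_pos hy p
  field_simp

theorem inv_Gamma_one_sub_mul_Gamma_one_add {p : ℝ} (hp : p ≠ 0) :
    (Gamma (1 - p) * Gamma (1 + p))⁻¹ = sin (π * p) / (π * p) := by
  rw [add_comm, Gamma_add_one hp, mul_left_comm, mul_comm (Gamma (1 - p)),
    Gamma_mul_Gamma_one_sub, mul_div_assoc', inv_div, mul_comm]

theorem sin_pi_mul_div_nonneg {p : ℝ} (hp0 : 0 < p) (hp1 : p < 1) :
    0 ≤ sin (π * p) / (π * p) :=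
  div_nonneg (sin_nonneg_of_nonneg_of_le_pi (by positivity) (by nlinarith [pi_pos]))
    (by positivity)

theorem sin_pi_mul_div_le_one {p : ℝ} (hp0 : 0 < p) :
    sin (π * p) / (π * p) ≤ 1 :=
  div_le_one_of_le₀ (sin_lt (by positivity)).le (by positivity)

end Real

-- `L1 n b` is `∫ p in 0..1, L1Integrand b (n - b) p` by definition.
noncomputable def L1Integrand (x y p : ℝ) : ℝ :=
  Gamma (x - p) / Gamma (x + 1) * (Gamma (y + p) / Gamma (y + 1)) /
    (Gamma (1 - p) * Gamma (1 + p))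

theorem sq_mul_L1Integrand_eq {N x y p : ℝ} (hN : 0 < N) (hx : 1 < x) (hy : 0 < y)
    (hp : p ≠ 0) :
    N ^ 2 * L1Integrand x y p = gammaRatio (1 - p) (x - 1) * gammaRatio p y *
      (((x - 1) / N) ^ (-p) * (x / N)⁻¹ * (y / N) ^ (p - 1)) * (sin (π * p) / (π * p)) := by
  have hx1 : 0 < x - 1 := by linarith
  rw [L1Integrand, div_eq_mul_inv, inv_Gamma_one_sub_mul_Gamma_one_add hp,
    Gamma_sub_div_Gamma_add_one hx, Gamma_add_div_Gamma_add_one hy,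
    div_rpow hx1.le hN.le, div_rpow hy.le hN.le, rpow_neg hN.le, rpow_sub_one hN.ne', inv_div]
  have := rpow_pos_of_pos hN p
  have := rpow_pos_of_pos hx1 (-p)
  field_simp

theorem rpow_le_inv_of_le {a c t : ℝ} (ha : 0 < a) (ha1 : a ≤ 1) (hac : a ≤ c) (ht : -1 ≤ t)
    (ht0 : t ≤ 0) : c ^ t ≤ a⁻¹ :=
  calc c ^ t ≤ a ^ t := rpow_le_rpow_of_nonpos ha hac ht0
    _ ≤ a ^ (-1 : ℝ) := rpow_le_rpow_of_exponent_ge ha ha1 ht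
    _ = a⁻¹ := rpow_neg_one a

theorem norm_sq_mul_L1Integrand_le {N x y p a b : ℝ} (hN : 0 < N) (ha : 0 < a) (ha1 : a ≤ 1)
    (hb : 0 < b) (hb1 : b ≤ 1) (hxa : a ≤ (x - 1) / N) (hyb : b ≤ y / N) (hp0 : 0 < p)
    (hp1 : p < 1) : ‖N ^ 2 * L1Integrand x y p‖ ≤ a⁻¹ * a⁻¹ * b⁻¹ := by
  have hx1 : 0 < x - 1 := (div_pos_iff_of_pos_right hN).1 (ha.trans_le hxa)
  have hy : 0 < y := (div_pos_iff_of_pos_right hN).1 (hb.trans_le hyb)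
  have hxN : a ≤ x / N := hxa.trans (div_le_div_of_nonneg_right (by linarith) hN.le)
  have hR1_pos := gammaRatio_pos (s := 1 - p) hx1 (by linarith)
  have hR2_pos := gammaRatio_pos (s := p) hy hp0.le
  have hsinc_nonneg := sin_pi_mul_div_nonneg hp0 hp1
  have hR1_le := gammaRatio_le_one hx1 (sub_pos.2 hp1) (by linarith)
  have hR2_le := gammaRatio_le_one hy hp0 hp1
  have hsinc_le := sin_pi_mul_div_le_one hp0
  have hxa_pow : ((x - 1) / N) ^ (-p) ≤ a⁻¹ :=
    rpow_le_inv_of_le ha ha1 hxa (by linarith) (by linarith)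
  have hyb_pow : (y / N) ^ (p - 1) ≤ b⁻¹ :=
    rpow_le_inv_of_le hb hb1 hyb (by linarith) (by linarith)
  have hxN_inv : 0 ≤ (x / N)⁻¹ := inv_nonneg.2 (ha.trans_le hxN).le
  have hP_nonneg : 0 ≤ ((x - 1) / N) ^ (-p) * (x / N)⁻¹ * (y / N) ^ (p - 1) :=
    mul_nonneg (mul_nonneg (rpow_nonneg (ha.trans_le hxa).le _) hxN_inv)
      (rpow_nonneg (hb.trans_le hyb).le _)
  have hP : ((x - 1) / N) ^ (-p) * (x / N)⁻¹ * (y / N) ^ (p - 1) ≤ a⁻¹ * a⁻¹ * b⁻¹ :=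
    mul_le_mul (mul_le_mul hxa_pow (inv_anti₀ ha hxN) hxN_inv (by positivity)) hyb_pow
      (rpow_nonneg (hb.trans_le hyb).le _) (by positivity)
  rw [sq_mul_L1Integrand_eq hN (by linarith) hy hp0.ne', Real.norm_of_nonneg (by positivity)]
  calc _ ≤ 1 * 1 * (a⁻¹ * a⁻¹ * b⁻¹) * 1 := by gcongr
    _ = a⁻¹ * a⁻¹ * b⁻¹ := by ring

section Asymptotics

variable {ι : Type*} {l : Filter ι} {N : ι → ℝ}

theorem tendsto_atTop_of_tendsto_div {f : ι → ℝ} {c : ℝ} (hc : 0 < c)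
    (hN : Tendsto N l atTop) (h : Tendsto (fun i => f i / N i) l (𝓝 c)) : Tendsto f l atTop :=
  (h.pos_mul_atTop hc hN).congr' <| by
    filter_upwards [hN.eventually_ne_atTop 0] with i hi using div_mul_cancel₀ _ hi

theorem tendsto_sub_div_of_tendsto_div {f : ι → ℝ} {c : ℝ} (a : ℝ) (hN : Tendsto N l atTop)
    (h : Tendsto (fun i => f i / N i) l (𝓝 c)) :
    Tendsto (fun i => (f i - a) / N i) l (𝓝 c) := by
  simpa [sub_div] using h.sub (tendsto_const_nhds.div_atTop hN)

variable {x y : ι → ℝ} {u : ℝ}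

theorem tendsto_sq_mul_L1Integrand {p : ℝ} (hu0 : 0 < u) (hu1 : u < 1) (hp0 : 0 < p)
    (hp1 : p < 1) (hN : Tendsto N l atTop) (hx : Tendsto (fun i => x i / N i) l (𝓝 u))
    (hy : Tendsto (fun i => y i / N i) l (𝓝 (1 - u))) :
    Tendsto (fun i => N i ^ 2 * L1Integrand (x i) (y i) p) l
      (𝓝 (u ^ (-p - 1) * (1 - u) ^ (p - 1) * (sin (π * p) / (π * p)))) := by
  have hx1 := tendsto_sub_div_of_tendsto_div 1 hN hx
  have hxtop := tendsto_atTop_of_tendsto_div hu0 hN hx1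
  have hytop := tendsto_atTop_of_tendsto_div (sub_pos.2 hu1) hN hy
  have hR1 := (tendsto_gammaRatio_atTop (sub_pos.2 hp1) (by linarith)).comp hxtop
  have hR2 := (tendsto_gammaRatio_atTop hp0 hp1).comp hytop
  have hP := ((hx1.rpow_const (p := -p) (Or.inl hu0.ne')).mul (hx.inv₀ hu0.ne')).mul
    (hy.rpow_const (p := p - 1) (Or.inl (sub_pos.2 hu1).ne'))
  have hlim := ((hR1.mul hR2).mul hP).mul_const (sin (π * p) / (π * p))
  rw [one_mul, one_mul, ← rpow_neg_one, ← rpow_add hu0, ← sub_eq_add_neg] at hlim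
  refine hlim.congr' ?_
  filter_upwards [hN.eventually_gt_atTop 0, hxtop.eventually_gt_atTop 0,
    hytop.eventually_gt_atTop 0] with i hNi hxi hyi
  exact (sq_mul_L1Integrand_eq hNi (sub_pos.1 hxi) hyi hp0.ne').symm

theorem tendsto_sq_mul_integral_L1Integrand [l.IsCountablyGenerated] (hu0 : 0 < u)
    (hu1 : u < 1) (hN : Tendsto N l atTop) (hx : Tendsto (fun i => x i / N i) l (𝓝 u))
    (hy : Tendsto (fun i => y i / N i) l (𝓝 (1 - u))) :
    Tendsto (fun i => N i ^ 2 * ∫ p in (0 : ℝ)..1, L1Integrand (x i) (y i) p) l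
      (𝓝 (f1 u)) := by
  have hv0 : 0 < 1 - u := sub_pos.2 hu1
  simp_rw [← intervalIntegral.integral_const_mul]
  refine intervalIntegral.tendsto_integral_filter_of_dominated_convergence
    (fun _ => (u / 2)⁻¹ * (u / 2)⁻¹ * ((1 - u) / 2)⁻¹) ?_ ?_ intervalIntegrable_const ?_
  · exact Eventually.of_forall fun i =>
      (by unfold L1Integrand; fun_prop : Measurable _).aestronglyMeasurable
  · filter_upwards [hN.eventually_gt_atTop 0,
      (tendsto_sub_div_of_tendsto_div 1 hN hx).eventually (eventually_ge_nhds (half_lt_self hu0)),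
      hy.eventually (eventually_ge_nhds (half_lt_self hv0))] with i hNi hxi hyi
    filter_upwards [volume.ae_ne 1] with p hp1 hp
    rw [uIoc_of_le zero_le_one] at hp
    exact norm_sq_mul_L1Integrand_le hNi (half_pos hu0) (by linarith) (half_pos hv0)
      (by linarith) hxi hyi hp.1 (hp.2.lt_of_ne hp1)
  · filter_upwards [volume.ae_ne 1] with p hp1 hp
    rw [uIoc_of_le zero_le_one] at hp
    exact tendsto_sq_mul_L1Integrand hu0 hu1 hp.1 (hp.2.lt_of_ne hp1) hN hx hy

end Asymptotics

theorem stmt11 (θ : ℝ) (u : ℝ) (hu : u ∈ Set.Ioo (0 : ℝ) 1) (b : ℕ → ℕ)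
    (hlim : Filter.Tendsto (fun n : ℕ => (b n : ℝ) / (n : ℝ)) Filter.atTop (nhds u)) :
    Filter.Tendsto (fun n : ℕ => (n : ℝ) ^ 2 * L1 n (b n)) Filter.atTop (nhds (f1 u)) ∧
    Filter.Tendsto (fun n : ℕ => (n : ℝ) * (θ * (n : ℝ) * L1 n (b n)))
      Filter.atTop (nhds (θ * f1 u)) := by
  have hcompl : Tendsto (fun n : ℕ => ((n : ℝ) - b n) / n) atTop (𝓝 (1 - u)) :=
    (tendsto_const_nhds.sub hlim).congr' <| by
      filter_upwards [eventually_ne_atTop 0] with n hn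
      rw [sub_div, div_self (Nat.cast_ne_zero.2 hn)]
  have hL1 : Tendsto (fun n : ℕ => (n : ℝ) ^ 2 * L1 n (b n)) atTop (𝓝 (f1 u)) :=
    tendsto_sq_mul_integral_L1Integrand hu.1 hu.2 tendsto_natCast_atTop_atTop hlim hcompl
  exact ⟨hL1, (hL1.const_mul θ).congr fun n => by ring⟩
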